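/- arXiv:2605.19844 — 5 statements merged into one kernel-verified Lean document; each statement's English description precedes it below -/
import Mathlib

section
/- Let p ≥ 1 be a real number and define f(u) := (u² + 4p²)^p for u ∈ ℝ. Then f is twice continuously differentiable on ℝ, and for every u ≥ 0 and every ξ ∈ [−1,1], the second derivative satisfies f''(u+ξ) ≤ 4√e · p² · (u² + 4p²)^{p−1}. -/
/-!
Differentiating twice, `f''(v) = 2p (v² + 4p²)^(p-1) + 4p(p-1) v² (v² + 4p²)^(p-2)`, and since
`v² ≤ v² + 4p²` this is at most `2p(2p-1) (v² + 4p²)^(p-1) ≤ 4p² (v² + 4p²)^(p-1)`. Moving from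
`u` to `v = u + ξ` raises the base by at most `2u + 1`, so with `S = u² + 4p²` the factor gained is
`(1 + (2u+1)/S)^(p-1) ≤ exp ((p-1)(2u+1)/S) ≤ exp (1/2)`, because
`S - 2(p-1)(2u+1) = (u - 2p + 2)² + 6p - 2 > 0`.
-/

open Real

section SqAddRpow

variable {c : ℝ}

theorem hasDerivAt_sq_add_rpow (hc : 0 < c) (p x : ℝ) :
    HasDerivAt (fun u : ℝ => (u ^ 2 + c) ^ p) (2 * p * x * (x ^ 2 + c) ^ (p - 1)) x := by
  have hbase : HasDerivAt (fun u : ℝ => u ^ 2 + c) (2 * x) x := by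
    simpa using (hasDerivAt_pow 2 x).add_const c
  convert hbase.rpow_const (p := p) (Or.inl (by positivity)) using 1
  ring

theorem deriv_sq_add_rpow (hc : 0 < c) (p : ℝ) :
    deriv (fun u : ℝ => (u ^ 2 + c) ^ p) = fun x => 2 * p * x * (x ^ 2 + c) ^ (p - 1) :=
  funext fun x => (hasDerivAt_sq_add_rpow hc p x).deriv

theorem deriv_deriv_sq_add_rpow (hc : 0 < c) (p x : ℝ) :
    deriv (deriv (fun u : ℝ => (u ^ 2 + c) ^ p)) x =
      2 * p * (x ^ 2 + c) ^ (p - 1) + 4 * p * (p - 1) * x ^ 2 * (x ^ 2 + c) ^ (p - 2) := by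
  have hlin : HasDerivAt (fun u : ℝ => 2 * p * u) (2 * p) x := by
    simpa using (hasDerivAt_id x).const_mul (2 * p)
  have hprod : HasDerivAt (fun u : ℝ => 2 * p * u * (u ^ 2 + c) ^ (p - 1)) _ x :=
    hlin.mul (hasDerivAt_sq_add_rpow hc (p - 1) x)
  rw [deriv_sq_add_rpow hc, hprod.deriv, show p - 1 - 1 = p - 2 by ring]
  ring

theorem deriv_deriv_sq_add_rpow_le (hc : 0 < c) {p : ℝ} (hp : 1 ≤ p) (x : ℝ) :
    deriv (deriv (fun u : ℝ => (u ^ 2 + c) ^ p)) x ≤ 2 * p * (2 * p - 1) * (x ^ 2 + c) ^ (p - 1) := by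
  have hG : 0 < x ^ 2 + c := by positivity
  have hsq : x ^ 2 * (x ^ 2 + c) ^ (p - 2) ≤ (x ^ 2 + c) ^ (p - 1) := by
    calc x ^ 2 * (x ^ 2 + c) ^ (p - 2) ≤ (x ^ 2 + c) * (x ^ 2 + c) ^ (p - 2) := by
          gcongr
          linarith
      _ = (x ^ 2 + c) ^ (p - 1) := by
          rw [mul_comm, ← rpow_add_one hG.ne']
          ring_nf
  have hcoef : 0 ≤ 4 * p * (p - 1) := by nlinarith
  rw [deriv_deriv_sq_add_rpow hc]
  nlinarith [mul_le_mul_of_nonneg_left hsq hcoef]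

theorem contDiff_sq_add_rpow (hc : 0 < c) (p : ℝ) {n : WithTop ℕ∞} :
    ContDiff ℝ n (fun u : ℝ => (u ^ 2 + c) ^ p) :=
  contDiff_iff_contDiffAt.2 fun x =>
    ((contDiffAt_id.pow 2).add contDiffAt_const).rpow_const_of_ne (by positivity)

end SqAddRpow

theorem rpow_add_le_exp_mul_rpow {S t q : ℝ} (hS : 0 < S) (ht : 0 ≤ S + t) (hq : 0 ≤ q) :
    (S + t) ^ q ≤ exp (q * t / S) * S ^ q := by
  have hfactor : S + t = S * (1 + t / S) := by field_simp
  have hnonneg : 0 ≤ 1 + t / S := by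
    rw [hfactor] at ht
    exact nonneg_of_mul_nonneg_right (by linarith) hS
  calc (S + t) ^ q = (1 + t / S) ^ q * S ^ q := by
        rw [hfactor, mul_rpow hS.le hnonneg, mul_comm]
    _ ≤ exp (t / S) ^ q * S ^ q := by
        gcongr
        linarith [add_one_le_exp (t / S)]
    _ = exp (q * t / S) * S ^ q := by
        rw [← exp_mul, mul_div_assoc, mul_comm q]

theorem shift_sq_add_rpow_le {p u ξ : ℝ} (hp : 1 ≤ p) (hu : 0 ≤ u) (hξ₁ : -1 ≤ ξ) (hξ₂ : ξ ≤ 1) :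
    ((u + ξ) ^ 2 + 4 * p ^ 2) ^ (p - 1) ≤ exp (1 / 2) * (u ^ 2 + 4 * p ^ 2) ^ (p - 1) := by
  set S := u ^ 2 + 4 * p ^ 2
  have hS : 0 < S := by positivity
  have hshift : (u + ξ) ^ 2 + 4 * p ^ 2 ≤ S + (2 * u + 1) := by
    nlinarith [sq_nonneg (ξ - 1), sq_nonneg (ξ + 1)]
  have hexponent : (p - 1) * (2 * u + 1) / S ≤ 1 / 2 := by
    rw [div_le_iff₀ hS]
    nlinarith [sq_nonneg (u - 2 * p + 2)]
  calc ((u + ξ) ^ 2 + 4 * p ^ 2) ^ (p - 1) ≤ (S + (2 * u + 1)) ^ (p - 1) := by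
        gcongr
    _ ≤ exp ((p - 1) * (2 * u + 1) / S) * S ^ (p - 1) :=
        rpow_add_le_exp_mul_rpow hS (by positivity) (by linarith)
    _ ≤ exp (1 / 2) * S ^ (p - 1) := by
        gcongr

/-- **Global curvature bound.** Let `p ≥ 1` and `f u = (u² + 4p²) ^ p` (real power).
Then `f` is twice continuously differentiable on `ℝ`, and for every `u ≥ 0` and
`ξ ∈ [-1,1]`, the second derivative satisfies
`f'' (u + ξ) ≤ 4 √e p² (u² + 4p²) ^ (p - 1)`. -/
theorem curvature_bound (p : ℝ) (hp : 1 ≤ p) :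
    ContDiff ℝ 2 (fun u : ℝ => (u ^ 2 + 4 * p ^ 2) ^ p) ∧
    ∀ u : ℝ, 0 ≤ u → ∀ ξ : ℝ, -1 ≤ ξ → ξ ≤ 1 →
      deriv (deriv (fun u : ℝ => (u ^ 2 + 4 * p ^ 2) ^ p)) (u + ξ) ≤
        4 * Real.sqrt (Real.exp 1) * p ^ 2 * (u ^ 2 + 4 * p ^ 2) ^ (p - 1) := by
  have hc : 0 < 4 * p ^ 2 := by positivity
  refine ⟨contDiff_sq_add_rpow hc p, fun u hu ξ hξ₁ hξ₂ => ?_⟩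
  rw [← exp_half]
  calc deriv (deriv (fun u : ℝ => (u ^ 2 + 4 * p ^ 2) ^ p)) (u + ξ)
      ≤ 2 * p * (2 * p - 1) * ((u + ξ) ^ 2 + 4 * p ^ 2) ^ (p - 1) :=
        deriv_deriv_sq_add_rpow_le hc hp (u + ξ)
    _ ≤ 4 * p ^ 2 * (exp (1 / 2) * (u ^ 2 + 4 * p ^ 2) ^ (p - 1)) := by
        refine mul_le_mul (by nlinarith) (shift_sq_add_rpow_le hp hu hξ₁ hξ₂) ?_ (by positivity)
        positivity
    _ = 4 * exp (1 / 2) * p ^ 2 * (u ^ 2 + 4 * p ^ 2) ^ (p - 1) := by ring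
end

section
/- Let Q be a finite set of size m ≥ 1, n ≥ 1 an integer, p ≥ 1 and σ ≥ 0 reals, and let (z^t)_{t≥0} be a deficit process on Q satisfying the potential-rule moment conditions with parameters n, σ², p. Then for every t ≥ 0, (Σ_{q∈Q} f(z^t_q))^{1/p} ≤ m^{1/p} · (4p² + 2√e · p · σ² · t / n). -/
open Finset

/-- The potential component `f p u = (u² + 4p²) ^ p` (real power). -/
noncomputable def potComp (p u : ℝ) : ℝ := (u ^ 2 + 4 * p ^ 2) ^ p

/-- A deficit process on `Q` satisfying the potential-rule moment conditions with
parameters `n`, `σ²`, `p`: all deficits are nonnegative, initially zero, and at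
each round there are increments `Δ q k ∈ [-1,1]` with nonpositive sum and squared
sum at most `σ²`, such that the next potential is at most the average potential
over the `n` reference increments. -/
def DeficitProcess (Q : Type*) [Fintype Q] (n : ℕ) (σ p : ℝ) (z : ℕ → Q → ℝ) : Prop :=
  (∀ t q, 0 ≤ z t q) ∧ (∀ q, z 0 q = 0) ∧
  ∀ t : ℕ, ∃ Δ : Q → Fin n → ℝ,
    (∀ q k, -1 ≤ Δ q k ∧ Δ q k ≤ 1) ∧
    (∀ q, ∑ k, Δ q k ≤ 0) ∧
    (∀ q, ∑ k, (Δ q k) ^ 2 ≤ σ ^ 2) ∧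
    (∑ q, potComp p (z (t + 1) q) ≤
      (1 / (n : ℝ)) * ∑ k, ∑ q, potComp p (max (z t q + Δ q k) 0))

/-!
Write `Φ t = ∑ q, f (z t q)`. On `[u - 1, u + 1]` with `u ≥ 0` the second derivative of `f`
is at most `4 √e p² (u² + 4p²)^(p-1)`, so a second-order Taylor bound, `f' u ≥ 0` and the two
moment conditions give `Φ (t+1) ≤ Φ t + (2 √e p² σ² / n) ∑ q, (z t q ² + 4p²)^(p-1)`.
Hölder's inequality bounds that sum by `m^(1/p) Φ t ^ (1 - 1/p)`, and then Bernoulli's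
inequality `B^p + p B^(p-1) a ≤ (B + a)^p` shows inductively that `Φ t ≤ B t ^ p` for the
linearly growing `B t = m^(1/p) (4p² + 2 √e p σ² t / n)`.
-/

open Real

theorem ConvexOn.add_mul_sub_le {S : Set ℝ} {f : ℝ → ℝ} {f' x y : ℝ} (hfc : ConvexOn ℝ S f)
    (hx : x ∈ S) (hy : y ∈ S) (hf : HasDerivAt f f' x) : f x + f' * (y - x) ≤ f y := by
  rcases lt_trichotomy x y with hxy | rfl | hxy
  · have := hfc.le_slope_of_hasDerivAt hx hy hxy hf
    rw [slope_def_field, le_div_iff₀ (sub_pos.2 hxy)] at this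
    linarith
  · simp
  · have := hfc.slope_le_of_hasDerivAt hy hx hxy hf
    rw [slope_def_field, div_le_iff₀ (sub_pos.2 hxy)] at this
    linarith

theorem le_add_deriv_mul_add_sq_of_deriv2_le {S : Set ℝ} (hS : Convex ℝ S) {f f' f'' : ℝ → ℝ}
    {M x y : ℝ} (hf : ∀ x, HasDerivAt f (f' x) x) (hf' : ∀ x, HasDerivAt f' (f'' x) x)
    (hM : ∀ x ∈ S, f'' x ≤ M) (hx : x ∈ S) (hy : y ∈ S) :
    f y ≤ f x + f' x * (y - x) + M / 2 * (y - x) ^ 2 := by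
  have hg : ∀ w, HasDerivAt (fun w ↦ M / 2 * (w - x) ^ 2 - f w) (M * (w - x) - f' w) w := by
    intro w
    have hsq : HasDerivAt (fun w ↦ (w - x) ^ 2) (2 * (w - x)) w := by
      simpa using ((hasDerivAt_id w).sub_const x).fun_pow 2
    exact ((hsq.const_mul (M / 2)).fun_sub (hf w)).congr_deriv (by ring)
  have hg' : ∀ w, HasDerivAt (fun w ↦ M * (w - x) - f' w) (M - f'' w) w := fun w ↦ by
    simpa using (((hasDerivAt_id w).sub_const x).const_mul M).fun_sub (hf' w)
  have hconv : ConvexOn ℝ S (fun w ↦ M / 2 * (w - x) ^ 2 - f w) :=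
    convexOn_of_hasDerivWithinAt2_nonneg hS
      (fun w _ ↦ (hg w).continuousAt.continuousWithinAt)
      (fun w _ ↦ (hg w).hasDerivWithinAt) (fun w _ ↦ (hg' w).hasDerivWithinAt)
      (fun w hw ↦ sub_nonneg.2 (hM w (interior_subset hw)))
  have := hconv.add_mul_sub_le hx hy (hg x)
  simp only [sub_self, mul_zero, zero_sub, ne_eq, OfNat.ofNat_ne_zero, not_false_eq_true,
    zero_pow] at this
  linarith

theorem add_mul_rpow_sub_one_le_add_rpow {p B a : ℝ} (hp : 1 ≤ p) (hB : 0 ≤ B) (ha : 0 ≤ a) :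
    B ^ p + p * B ^ (p - 1) * a ≤ (B + a) ^ p := by
  simpa using (convexOn_rpow hp).add_mul_sub_le (Set.mem_Ici.2 hB)
    (Set.mem_Ici.2 (add_nonneg hB ha)) (hasDerivAt_rpow_const (Or.inr hp))

theorem add_mul_rpow_one_sub_inv_le {p x B a : ℝ} (hp : 1 ≤ p) (hx : 0 ≤ x) (hxB : x ≤ B ^ p)
    (hB : 0 ≤ B) (ha : 0 ≤ a) : x + p * a * x ^ (1 - p⁻¹) ≤ (B + a) ^ p := by
  have hp0 : 0 < p := by linarith
  have hpow : x ^ (1 - p⁻¹) ≤ B ^ (p - 1) :=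
    calc x ^ (1 - p⁻¹) ≤ (B ^ p) ^ (1 - p⁻¹) :=
          rpow_le_rpow hx hxB (sub_nonneg.2 (inv_le_one_of_one_le₀ hp))
      _ = B ^ (p - 1) := by rw [← rpow_mul hB, mul_sub, mul_inv_cancel₀ hp0.ne', mul_one]
  calc x + p * a * x ^ (1 - p⁻¹) ≤ B ^ p + p * B ^ (p - 1) * a := by
        nlinarith [mul_le_mul_of_nonneg_left hpow (by positivity : 0 ≤ p * a)]
    _ ≤ (B + a) ^ p := add_mul_rpow_sub_one_le_add_rpow hp hB ha

/-- Hölder's inequality with weights `g i ^ p`, applied to `(g i)⁻¹`. -/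
theorem sum_rpow_sub_one_le {ι : Type*} [Fintype ι] {p : ℝ} (hp : 1 ≤ p) (g : ι → ℝ)
    (hg : ∀ i, 0 < g i) :
    ∑ i, g i ^ (p - 1) ≤ (∑ i, g i ^ p) ^ (1 - p⁻¹) * (Fintype.card ι : ℝ) ^ p⁻¹ := by
  have := inner_le_weight_mul_Lp_of_nonneg univ hp (fun i ↦ g i ^ p) (fun i ↦ (g i)⁻¹)
    (fun i ↦ (rpow_pos_of_pos (hg i) p).le) (fun i ↦ inv_nonneg.2 (hg i).le)
  convert this using 2
  · rw [rpow_sub_one (hg _).ne', div_eq_mul_inv]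
  · simp [inv_rpow (hg _).le, mul_inv_cancel₀ (rpow_pos_of_pos (hg _) p).ne']

section potComp

variable {p : ℝ}

theorem hasDerivAt_potComp (hp : p ≠ 0) (x : ℝ) :
    HasDerivAt (potComp p) (2 * p * x * (x ^ 2 + 4 * p ^ 2) ^ (p - 1)) x := by
  have hsq : HasDerivAt (fun x ↦ x ^ 2 + 4 * p ^ 2) (2 * x) x := by
    simpa using (hasDerivAt_pow 2 x).add_const (4 * p ^ 2)
  exact (hsq.rpow_const (Or.inl (by positivity))).congr_deriv (by ring)

theorem hasDerivAt_potComp_deriv (hp : p ≠ 0) (x : ℝ) :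
    HasDerivAt (fun x ↦ 2 * p * x * (x ^ 2 + 4 * p ^ 2) ^ (p - 1))
      (2 * p * (x ^ 2 + 4 * p ^ 2) ^ (p - 1)
        + 4 * p * (p - 1) * x ^ 2 * (x ^ 2 + 4 * p ^ 2) ^ (p - 2)) x := by
  have hsq : HasDerivAt (fun x ↦ x ^ 2 + 4 * p ^ 2) (2 * x) x := by
    simpa using (hasDerivAt_pow 2 x).add_const (4 * p ^ 2)
  have hlin : HasDerivAt (fun x ↦ 2 * p * x) (2 * p) x := by
    simpa using (hasDerivAt_id x).const_mul (2 * p)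
  refine (hlin.mul (hsq.rpow_const (p := p - 1) (Or.inl (by positivity)))).congr_deriv ?_
  rw [show p - 1 - 1 = p - 2 by ring]
  ring

theorem potComp_deriv2_le (hp : 1 ≤ p) (x : ℝ) :
    2 * p * (x ^ 2 + 4 * p ^ 2) ^ (p - 1) + 4 * p * (p - 1) * x ^ 2 * (x ^ 2 + 4 * p ^ 2) ^ (p - 2)
      ≤ 4 * p ^ 2 * (x ^ 2 + 4 * p ^ 2) ^ (p - 1) := by
  have hg : 0 < x ^ 2 + 4 * p ^ 2 := by positivity
  have hx2 : x ^ 2 * (x ^ 2 + 4 * p ^ 2) ^ (p - 2) ≤ (x ^ 2 + 4 * p ^ 2) ^ (p - 1) :=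
    calc x ^ 2 * (x ^ 2 + 4 * p ^ 2) ^ (p - 2)
        ≤ (x ^ 2 + 4 * p ^ 2) * (x ^ 2 + 4 * p ^ 2) ^ (p - 2) := by gcongr; nlinarith
      _ = (x ^ 2 + 4 * p ^ 2) ^ (p - 1) := by
        rw [mul_comm, ← rpow_add_one hg.ne', show p - 2 + 1 = p - 1 by ring]
  nlinarith [mul_le_mul_of_nonneg_left hx2 (by nlinarith : (0 : ℝ) ≤ 4 * p * (p - 1)),
    rpow_nonneg hg.le (p - 1)]

theorem sq_add_le_of_mem_Icc (hp : 1 / 2 < p) {u x : ℝ} (hu : 0 ≤ u)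
    (hx : x ∈ Set.Icc (u - 1) (u + 1)) :
    x ^ 2 + 4 * p ^ 2 ≤ (1 + (2 * p - 1)⁻¹) * (u ^ 2 + 4 * p ^ 2) := by
  have h2p : 0 < 2 * p - 1 := by linarith
  have hx2 : x ^ 2 ≤ (u + 1) ^ 2 := sq_le_sq' (by linarith [hx.1]) hx.2
  have hkey : 2 * u + 1 ≤ (2 * p - 1)⁻¹ * (u ^ 2 + 4 * p ^ 2) := by
    rw [inv_mul_eq_div, le_div_iff₀ h2p]
    nlinarith [sq_nonneg (u - 2 * p + 1)]
  nlinarith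

theorem one_add_inv_rpow_le_sqrt_exp (hp : 1 ≤ p) : (1 + (2 * p - 1)⁻¹) ^ (p - 1) ≤ √(exp 1) := by
  have h2p : 0 < 2 * p - 1 := by linarith
  calc (1 + (2 * p - 1)⁻¹) ^ (p - 1) ≤ exp (2 * p - 1)⁻¹ ^ (p - 1) := by
        gcongr
        linarith [add_one_le_exp (2 * p - 1)⁻¹]
    _ = exp ((2 * p - 1)⁻¹ * (p - 1)) := (exp_mul _ _).symm
    _ ≤ exp (1 / 2) := by
        gcongr
        rw [inv_mul_eq_div, div_le_iff₀ h2p]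
        linarith
    _ = √(exp 1) := by rw [sqrt_eq_rpow, exp_one_rpow]

theorem potComp_deriv2_le_of_mem_Icc (hp : 1 ≤ p) {u x : ℝ} (hu : 0 ≤ u)
    (hx : x ∈ Set.Icc (u - 1) (u + 1)) :
    2 * p * (x ^ 2 + 4 * p ^ 2) ^ (p - 1) + 4 * p * (p - 1) * x ^ 2 * (x ^ 2 + 4 * p ^ 2) ^ (p - 2)
      ≤ 4 * √(exp 1) * p ^ 2 * (u ^ 2 + 4 * p ^ 2) ^ (p - 1) := by
  have hu' : 0 ≤ u ^ 2 + 4 * p ^ 2 := by positivity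
  calc _ ≤ 4 * p ^ 2 * (x ^ 2 + 4 * p ^ 2) ^ (p - 1) := potComp_deriv2_le hp x
    _ ≤ 4 * p ^ 2 * ((1 + (2 * p - 1)⁻¹) * (u ^ 2 + 4 * p ^ 2)) ^ (p - 1) := by
        gcongr
        exact sq_add_le_of_mem_Icc (by linarith) hu hx
    _ = 4 * p ^ 2 * (1 + (2 * p - 1)⁻¹) ^ (p - 1) * (u ^ 2 + 4 * p ^ 2) ^ (p - 1) := by
        have h2p : 0 < 2 * p - 1 := by linarith
        rw [mul_rpow (by positivity) hu']
        ring
    _ ≤ 4 * p ^ 2 * √(exp 1) * (u ^ 2 + 4 * p ^ 2) ^ (p - 1) := by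
        gcongr
        exact one_add_inv_rpow_le_sqrt_exp hp
    _ = _ := by ring

theorem potComp_add_le (hp : 1 ≤ p) {u δ : ℝ} (hu : 0 ≤ u) (hδ : δ ∈ Set.Icc (-1) 1) :
    potComp p (u + δ) ≤ potComp p u + 2 * p * u * (u ^ 2 + 4 * p ^ 2) ^ (p - 1) * δ
      + 2 * √(exp 1) * p ^ 2 * (u ^ 2 + 4 * p ^ 2) ^ (p - 1) * δ ^ 2 := by
  have hp0 : p ≠ 0 := by positivity
  have := le_add_deriv_mul_add_sq_of_deriv2_le (convex_Icc (u - 1) (u + 1))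
    (hasDerivAt_potComp hp0) (hasDerivAt_potComp_deriv hp0)
    (fun x hx ↦ potComp_deriv2_le_of_mem_Icc hp hu hx)
    (x := u) (y := u + δ) ⟨by linarith, by linarith⟩ ⟨by linarith [hδ.1], by linarith [hδ.2]⟩
  simp only [add_sub_cancel_left] at this
  linarith

theorem potComp_max_zero_le (hp : 0 ≤ p) (x : ℝ) : potComp p (max x 0) ≤ potComp p x := by
  have hsq : max x 0 ^ 2 ≤ x ^ 2 := by
    rcases le_total x 0 with hx | hx <;> simp [hx, sq_nonneg]
  exact rpow_le_rpow (by positivity) (by linarith) hp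

theorem sum_potComp_max_add_le {ι : Type*} [Fintype ι] (hp : 1 ≤ p) {u σ : ℝ} (hu : 0 ≤ u)
    (Δ : ι → ℝ) (hΔ : ∀ k, Δ k ∈ Set.Icc (-1) 1) (hsum : ∑ k, Δ k ≤ 0)
    (hsq : ∑ k, Δ k ^ 2 ≤ σ ^ 2) :
    ∑ k, potComp p (max (u + Δ k) 0) ≤ Fintype.card ι * potComp p u
      + 2 * √(exp 1) * p ^ 2 * (u ^ 2 + 4 * p ^ 2) ^ (p - 1) * σ ^ 2 := by
  set a := 2 * p * u * (u ^ 2 + 4 * p ^ 2) ^ (p - 1)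
  set c := 2 * √(exp 1) * p ^ 2 * (u ^ 2 + 4 * p ^ 2) ^ (p - 1)
  have ha : 0 ≤ a := by positivity
  have hc : 0 ≤ c := by positivity
  calc ∑ k, potComp p (max (u + Δ k) 0) ≤ ∑ k, (potComp p u + a * Δ k + c * Δ k ^ 2) :=
        sum_le_sum fun k _ ↦
          (potComp_max_zero_le (by linarith) _).trans (potComp_add_le hp hu (hΔ k))
    _ = Fintype.card ι * potComp p u + a * ∑ k, Δ k + c * ∑ k, Δ k ^ 2 := by
        simp only [sum_add_distrib, mul_sum, sum_const, card_univ, nsmul_eq_mul]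
    _ ≤ Fintype.card ι * potComp p u + c * σ ^ 2 := by
        nlinarith [mul_nonpos_of_nonneg_of_nonpos ha hsum, mul_le_mul_of_nonneg_left hsq hc]

theorem DeficitProcess.potential_succ_le {Q : Type*} [Fintype Q] {n : ℕ} {σ : ℝ}
    {z : ℕ → Q → ℝ} (h : DeficitProcess Q n σ p z) (hn : 1 ≤ n) (hp : 1 ≤ p) (t : ℕ) :
    ∑ q, potComp p (z (t + 1) q) ≤ ∑ q, potComp p (z t q)
      + σ ^ 2 / n * (2 * √(exp 1) * p ^ 2 * ∑ q, (z t q ^ 2 + 4 * p ^ 2) ^ (p - 1)) := by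
  obtain ⟨hnn, -, hstep⟩ := h
  obtain ⟨Δ, hΔ, hsum, hsq, hpot⟩ := hstep t
  have hn0 : (n : ℝ) ≠ 0 := Nat.cast_ne_zero.2 (by omega)
  calc ∑ q, potComp p (z (t + 1) q)
      ≤ 1 / n * ∑ q, ∑ k, potComp p (max (z t q + Δ q k) 0) := by rwa [sum_comm]
    _ ≤ 1 / n * ∑ q, (n * potComp p (z t q)
          + 2 * √(exp 1) * p ^ 2 * (z t q ^ 2 + 4 * p ^ 2) ^ (p - 1) * σ ^ 2) := by
        gcongr with q
        simpa using sum_potComp_max_add_le hp (hnn t q) (Δ q) (hΔ q) (hsum q) (hsq q)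
    _ = _ := by
        rw [sum_add_distrib, ← mul_sum, ← sum_mul, ← mul_sum]
        field_simp

theorem DeficitProcess.potential_succ_le_rpow {Q : Type*} [Fintype Q] {n : ℕ} {σ : ℝ}
    {z : ℕ → Q → ℝ} (h : DeficitProcess Q n σ p z) (hn : 1 ≤ n) (hp : 1 ≤ p) (t : ℕ) :
    ∑ q, potComp p (z (t + 1) q) ≤ ∑ q, potComp p (z t q)
      + p * (2 * √(exp 1) * p * σ ^ 2 * (Fintype.card Q : ℝ) ^ p⁻¹ / n)
        * (∑ q, potComp p (z t q)) ^ (1 - p⁻¹) := by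
  have hHolder := sum_rpow_sub_one_le hp (fun q ↦ z t q ^ 2 + 4 * p ^ 2) fun q ↦ by positivity
  calc _ ≤ _ := h.potential_succ_le hn hp t
    _ ≤ ∑ q, potComp p (z t q) + σ ^ 2 / n * (2 * √(exp 1) * p ^ 2
          * ((∑ q, potComp p (z t q)) ^ (1 - p⁻¹) * (Fintype.card Q : ℝ) ^ p⁻¹)) := by
        gcongr
        exact hHolder
    _ = _ := by ring

end potComp

theorem anytime_potential_bound_general (Q : Type*) [Fintype Q]
    (n : ℕ) (hn : 1 ≤ n) (p σ : ℝ) (hp : 1 ≤ p)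
    (z : ℕ → Q → ℝ) (hproc : DeficitProcess Q n σ p z) :
    ∀ t : ℕ,
      (∑ q, potComp p (z t q)) ^ (1 / p) ≤
        (Fintype.card Q : ℝ) ^ (1 / p) *
          (4 * p ^ 2 + 2 * Real.sqrt (Real.exp 1) * p * σ ^ 2 * (t : ℝ) / (n : ℝ)) := by
  have hp0 : 0 < p := by linarith
  have hΦ : ∀ t, 0 ≤ ∑ q, potComp p (z t q) := fun t ↦
    sum_nonneg fun q _ ↦ rpow_nonneg (by positivity) _
  have hbound : ∀ t : ℕ, ∑ q, potComp p (z t q) ≤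
      ((Fintype.card Q : ℝ) ^ p⁻¹ * (4 * p ^ 2 + 2 * √(exp 1) * p * σ ^ 2 * t / n)) ^ p := by
    intro t
    induction t with
    | zero =>
      simp only [potComp, hproc.2.1, CharP.cast_eq_zero, mul_zero, zero_div, add_zero]
      rw [mul_rpow (by positivity) (by positivity), rpow_inv_rpow (by positivity) hp0.ne']
      simp
    | succ t ih =>
      refine (hproc.potential_succ_le_rpow hn hp t).trans ?_
      refine (add_mul_rpow_one_sub_inv_le hp (hΦ t) ih (by positivity) (by positivity)).trans_eq ?_
      push_cast
      ring_nf
  intro t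
  rw [one_div, rpow_inv_le_iff_of_pos (hΦ t) (by positivity) hp0]
  exact hbound t

/-- **Any-time potential bound.** For a deficit process satisfying the moment
conditions, for every `t ≥ 0`,
`(∑ q, f (z t q)) ^ (1/p) ≤ m ^ (1/p) * (4p² + 2 √e p σ² t / n)`. -/
theorem anytime_potential_bound (Q : Type*) [Fintype Q] (hm : 1 ≤ Fintype.card Q)
    (n : ℕ) (hn : 1 ≤ n) (p σ : ℝ) (hp : 1 ≤ p) (hσ : 0 ≤ σ)
    (z : ℕ → Q → ℝ) (hproc : DeficitProcess Q n σ p z) :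
    ∀ t : ℕ,
      (∑ q, potComp p (z t q)) ^ (1 / p) ≤
        (Fintype.card Q : ℝ) ^ (1 / p) *
          (4 * p ^ 2 + 2 * Real.sqrt (Real.exp 1) * p * σ ^ 2 * (t : ℝ) / (n : ℝ)) :=
  anytime_potential_bound_general Q n hn p σ hp z hproc
end

section
/- Let k be a natural number and let (x_r)_{r≥1} and (y_r)_{r≥1} be nonincreasing sequences of nonnegative reals, each with only finitely many nonzero terms. Suppose that for every real τ > 0, the number of indices r with x_r ≥ τ is at most k plus the number of indices r with y_r ≥ τ. Then Σ_{r≥1} x_{k+r} ≤ Σ_{r≥1} y_r; equivalently, Σ_{r≥1} x_r − Σ_{r=1}^{k} x_r ≤ Σ_{r≥1} y_r. -/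
/-!
If `x (k + r) > y r`, then at the threshold `τ = x (k + r)` at least `k + r + 1` terms of `x`
reach `τ` while at most `r` terms of `y` do, contradicting the hypothesis. Hence the shifted
sequence `r ↦ x (k + r)` is dominated termwise by `y`, and the claim follows by summing.
-/

section ThresholdCounts

variable {α : Type*} [LinearOrder α]

theorem Antitone.ncard_setOf_le_le_of_lt {y : ℕ → α} (hy : Antitone y) {τ : α} {r : ℕ}
    (hr : y r < τ) : {s | τ ≤ y s}.ncard ≤ r := by
  have hsub : {s | τ ≤ y s} ⊆ Set.Iio r := fun s hs =>
    lt_of_not_ge fun hrs => (hr.trans_le hs).not_ge (hy hrs)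
  simpa using Set.ncard_le_ncard hsub

theorem Antitone.succ_le_ncard_setOf_le {x : ℕ → α} (hx : Antitone x) (n : ℕ)
    (hfin : {s | x n ≤ x s}.Finite) : n + 1 ≤ {s | x n ≤ x s}.ncard := by
  have hsub : Set.Iic n ⊆ {s | x n ≤ x s} := fun _ hs => hx hs
  simpa using Set.ncard_le_ncard hsub hfin

theorem Antitone.le_of_ncard_setOf_le_add [Zero α] {x y : ℕ → α} {k : ℕ}
    (hx : Antitone x) (hy : Antitone y) (hy0 : ∀ r, 0 ≤ y r)
    (hxfin : (Function.support x).Finite)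
    (hcount : ∀ τ : α, 0 < τ → {r : ℕ | τ ≤ x r}.ncard ≤ k + {r : ℕ | τ ≤ y r}.ncard)
    (r : ℕ) : x (k + r) ≤ y r := by
  by_contra! hlt
  have hpos : 0 < x (k + r) := (hy0 r).trans_lt hlt
  have hfin : {s | x (k + r) ≤ x s}.Finite :=
    hxfin.subset fun s hs hs0 => (hpos.trans_le hs).ne' hs0
  have hx_many := hx.succ_le_ncard_setOf_le (k + r) hfin
  have hy_few := hy.ncard_setOf_le_le_of_lt hlt
  have := hcount _ hpos
  omega

end ThresholdCounts

theorem threshold_deficits_imply_EFk_general (k : ℕ) (x y : ℕ → ℝ)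
    (hxmono : Antitone x) (hymono : Antitone y)
    (hy0 : ∀ r, 0 ≤ y r)
    (hxfin : (Function.support x).Finite) (hyfin : (Function.support y).Finite)
    (hcount : ∀ τ : ℝ, 0 < τ →
      {r : ℕ | τ ≤ x r}.ncard ≤ k + {r : ℕ | τ ≤ y r}.ncard) :
    (∑' r : ℕ, x (k + r) ≤ ∑' r : ℕ, y r) ∧
    ((∑' r : ℕ, x r) - ∑ r ∈ Finset.range k, x r ≤ ∑' r : ℕ, y r) := by
  have hx : Summable x := summable_of_hasFiniteSupport hxfin
  have hshift : Summable fun r => x (k + r) := by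
    simpa only [add_comm] using (summable_nat_add_iff k).mpr hx
  have hle : ∑' r, x (k + r) ≤ ∑' r, y r :=
    hshift.tsum_le_tsum (hxmono.le_of_ncard_setOf_le_add hymono hy0 hxfin hcount)
      (summable_of_hasFiniteSupport hyfin)
  have hsplit : ∑ r ∈ Finset.range k, x r + ∑' r, x (k + r) = ∑' r, x r := by
    simpa only [add_comm] using hx.sum_add_tsum_nat_add k
  exact ⟨hle, by linarith⟩

/-- **Threshold deficits imply EFk (combinatorial core).**
Let `k : ℕ` and let `x, y : ℕ → ℝ` be nonincreasing sequences of nonnegative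
reals with finite support (the index `r : ℕ` plays the role of `r ≥ 1`).
If for every threshold `τ > 0` the number of indices with `x r ≥ τ` is at most
`k` plus the number of indices with `y r ≥ τ`, then
`∑ r, x (k + r) ≤ ∑ r, y r`; equivalently,
`∑ r, x r - ∑_{r < k} x r ≤ ∑ r, y r`. -/
theorem threshold_deficits_imply_EFk (k : ℕ) (x y : ℕ → ℝ)
    (hxmono : Antitone x) (hymono : Antitone y)
    (hx0 : ∀ r, 0 ≤ x r) (hy0 : ∀ r, 0 ≤ y r)
    (hxfin : (Function.support x).Finite) (hyfin : (Function.support y).Finite)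
    (hcount : ∀ τ : ℝ, 0 < τ →
      {r : ℕ | τ ≤ x r}.ncard ≤ k + {r : ℕ | τ ≤ y r}.ncard) :
    (∑' r : ℕ, x (k + r) ≤ ∑' r : ℕ, y r) ∧
    ((∑' r : ℕ, x r) - ∑ r ∈ Finset.range k, x r ≤ ∑' r : ℕ, y r) :=
  threshold_deficits_imply_EFk_general k x y hxmono hymono hy0 hxfin hyfin hcount
end

section
/- Let n ≥ 2 be an integer, c ≥ 1 a real, and z a real with c ≤ z ≤ 4c. Set s := (n−1) / (n(z + c)) and define ψ(u) := u + c·ln u for u > 0. Then 1/(10c) ≤ s ≤ 1/2, the identity ψ(z) − ψ(z(1 + s)) + ψ'(z)·z·s = c·(s − ln(1 + s)) holds, and c·(s − ln(1 + s)) ≥ 1/(400c). -/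
open Real

/-- Apply `exp t ≥ 1 + t + t²/2` at `t = s - s²/4`; it suffices that `(1 - s/4)² ≥ 1/2`. -/
theorem Real.log_one_add_le_sub_sq_div_four {s : ℝ} (h0 : 0 ≤ s) (h1 : s ≤ 1) :
    log (1 + s) ≤ s - s ^ 2 / 4 := by
  have ht : 0 ≤ s - s ^ 2 / 4 := by nlinarith
  have hexp : 1 + s ≤ exp (s - s ^ 2 / 4) := by
    nlinarith [quadratic_le_exp_of_nonneg ht, mul_nonneg (mul_nonneg h0 h0) (sub_nonneg.2 h1)]
  calc log (1 + s) ≤ log (exp (s - s ^ 2 / 4)) := log_le_log (by linarith) hexp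
    _ = s - s ^ 2 / 4 := log_exp _

lemma one_div_ten_mul_le_sub_one_div_mul_add {n : ℕ} (hn : 2 ≤ n) {c z : ℝ} (hc : 0 < c)
    (hz1 : c ≤ z) (hz2 : z ≤ 4 * c) : 1 / (10 * c) ≤ ((n : ℝ) - 1) / (n * (z + c)) := by
  have hn2 : (2 : ℝ) ≤ n := by exact_mod_cast hn
  have hden : 0 < (n : ℝ) * (z + c) := mul_pos (by linarith) (by linarith)
  rw [div_le_div_iff₀ (by positivity) hden]
  nlinarith

lemma sub_one_div_mul_add_le_one_half {n : ℕ} (hn : 1 ≤ n) {c z : ℝ} (hc : 1 ≤ c)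
    (hz1 : c ≤ z) :
    ((n : ℝ) - 1) / (n * (z + c)) ≤ 1 / 2 := by
  have hn1 : (1 : ℝ) ≤ n := by exact_mod_cast hn
  have hden : 0 < (n : ℝ) * (z + c) := mul_pos (by linarith) (by linarith)
  rw [div_le_div_iff₀ hden two_pos]
  nlinarith

lemma potential_sub_potential_mul_add_deriv {c z s : ℝ} (hz : 0 < z) (hs : 0 < 1 + s) :
    (z + c * log z) - (z * (1 + s) + c * log (z * (1 + s))) + (1 + c / z) * z * s =
      c * (s - log (1 + s)) := by
  rw [log_mul hz.ne' hs.ne']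
  field_simp
  ring

lemma one_div_le_mul_sub_log_one_add {c s : ℝ} (hc : 0 < c) (hs0 : 1 / (10 * c) ≤ s)
    (hs1 : s ≤ 1) : 1 / (400 * c) ≤ c * (s - log (1 + s)) := by
  have hs : 0 ≤ s := le_trans (by positivity) hs0
  have hsq : 1 / (100 * c ^ 2) ≤ s ^ 2 := by
    calc 1 / (100 * c ^ 2) = (1 / (10 * c)) ^ 2 := by field_simp; norm_num
      _ ≤ s ^ 2 := pow_le_pow_left₀ (by positivity) hs0 2
  calc 1 / (400 * c) = c * (1 / (100 * c ^ 2) / 4) := by field_simp; norm_num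
    _ ≤ c * (s ^ 2 / 4) := by gcongr
    _ ≤ c * (s - log (1 + s)) := by
      gcongr
      linarith [log_one_add_le_sub_sq_div_four hs hs1]

/-- **Per-round potential drop in low-value winner rounds.**
Let `n ≥ 2`, `c ≥ 1`, and `c ≤ z ≤ 4c`. Set `s := (n-1) / (n (z + c))` and
`ψ u := u + c ln u`. Then `1/(10c) ≤ s ≤ 1/2`, the identity
`ψ z - ψ (z (1+s)) + ψ' z · z · s = c (s - ln (1+s))` holds (where
`ψ' z = 1 + c/z`), and `c (s - ln (1+s)) ≥ 1/(400 c)`. -/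
theorem low_value_round_drop (n : ℕ) (hn : 2 ≤ n) (c z : ℝ)
    (hc : 1 ≤ c) (hz1 : c ≤ z) (hz2 : z ≤ 4 * c)
    (s : ℝ) (hs : s = ((n : ℝ) - 1) / ((n : ℝ) * (z + c))) :
    (1 / (10 * c) ≤ s ∧ s ≤ 1 / 2) ∧
    ((z + c * Real.log z) - (z * (1 + s) + c * Real.log (z * (1 + s))) +
        (1 + c / z) * z * s = c * (s - Real.log (1 + s))) ∧
    (1 / (400 * c) ≤ c * (s - Real.log (1 + s))) := by
  have hc0 : 0 < c := by linarith
  have hs_lb : 1 / (10 * c) ≤ s := hs ▸ one_div_ten_mul_le_sub_one_div_mul_add hn hc0 hz1 hz2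
  have hs_ub : s ≤ 1 / 2 := hs ▸ sub_one_div_mul_add_le_one_half (by omega) hc hz1
  have hs_pos : 0 < s := lt_of_lt_of_le (by positivity) hs_lb
  exact ⟨⟨hs_lb, hs_ub⟩, potential_sub_potential_mul_add_deriv (by linarith) (by linarith),
    one_div_le_mul_sub_log_one_add hc0 hs_lb (by linarith)⟩
end

section
/- Let n ≥ 2 be an integer, c ≥ 0 a real, i an index in {1, …, n}, and for each j ∈ {1, …, n} let P_j be a finite set of items; let v be a real-valued function on items with 0 ≤ v(g) ≤ 1 for every item g. Suppose that for every j ≠ i, Σ_{g∈P_j} v(g) − Σ_{g∈P_i} v(g) ≤ c · s_j, where s_j denotes the maximum of v(g) over g ∈ P_j (and s_j := 0 if P_j is empty). Then (1/n) Σ_{j=1}^n Σ_{g∈P_j} v(g) − Σ_{g∈P_i} v(g) ≤ c. -/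
/-- The maximum value of `v` over a finite set, with value `0` on the empty set. -/
noncomputable def maxVal {α : Type*} (s : Finset α) (v : α → ℝ) : ℝ :=
  if h : s.Nonempty then s.sup' h v else 0

open Finset
open scoped BigOperators

theorem maxVal_le {α : Type*} {s : Finset α} {v : α → ℝ} {b : ℝ} (hb : 0 ≤ b)
    (h : ∀ g ∈ s, v g ≤ b) : maxVal s v ≤ b := by
  unfold maxVal
  split_ifs with hs
  · exact sup'_le hs v h
  · exact hb

theorem efx_implies_bprop_general (n : ℕ) (c : ℝ) (hc : 0 ≤ c)
    (Item : Type*) (P : Fin n → Finset Item) (v : Item → ℝ)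
    (hv1 : ∀ g, v g ≤ 1) (i : Fin n)
    (hEF : ∀ j, j ≠ i →
      (∑ g ∈ P j, v g) - (∑ g ∈ P i, v g) ≤ c * maxVal (P j) v) :
    (1 / (n : ℝ)) * (∑ j, ∑ g ∈ P j, v g) - ∑ g ∈ P i, v g ≤ c := by
  have hbundle : ∀ j, ∑ g ∈ P j, v g ≤ ∑ g ∈ P i, v g + c := by
    intro j
    rcases eq_or_ne j i with rfl | hj
    · linarith
    · have hmax : c * maxVal (P j) v ≤ c :=
        mul_le_of_le_one_right hc (maxVal_le zero_le_one fun g _ ↦ hv1 g)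
      linarith [hEF j hj]
  have hmean : 𝔼 j, ∑ g ∈ P j, v g ≤ ∑ g ∈ P i, v g + c :=
    expect_le ⟨i, mem_univ i⟩ fun j _ ↦ hbundle j
  rw [expect_eq_sum_div_card, card_univ, Fintype.card_fin] at hmean
  rw [one_div_mul_eq_div]
  linarith

/-- **EF×(c) implies bPROP(c) on bounded instances.**
Let `n ≥ 2`, `c ≥ 0`, `i` an agent, `P j` the bundle of agent `j`, and `v`
agent `i`'s valuation with `0 ≤ v g ≤ 1`. If for every `j ≠ i`,
`v (P j) - v (P i) ≤ c * max_{g ∈ P j} v g` (with the max equal to `0` on an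
empty bundle), then agent `i`'s proportionality deficit is at most `c`:
`(1/n) ∑ j, v (P j) - v (P i) ≤ c`. -/
theorem efx_implies_bprop (n : ℕ) (hn : 2 ≤ n) (c : ℝ) (hc : 0 ≤ c)
    (Item : Type*) (P : Fin n → Finset Item) (v : Item → ℝ)
    (hv0 : ∀ g, 0 ≤ v g) (hv1 : ∀ g, v g ≤ 1) (i : Fin n)
    (hEF : ∀ j, j ≠ i →
      (∑ g ∈ P j, v g) - (∑ g ∈ P i, v g) ≤ c * maxVal (P j) v) :
    (1 / (n : ℝ)) * (∑ j, ∑ g ∈ P j, v g) - ∑ g ∈ P i, v g ≤ c :=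
  efx_implies_bprop_general n c hc Item P v hv1 i hEF
end
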